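/- The Fourier transform on the basic space, (𝓕R)(Φ) := 𝓕(R(𝓕⁻¹∘Φ∘𝓕')), maps moderate maps to moderate maps and negligible maps to negligible maps. Moreover, the map R ↦ (Φ ↦ 𝓕⁻¹(R(𝓕∘Φ∘(𝓕')⁻¹))) is a two-sided inverse of 𝓕 on the basic space. Consequently 𝓕 induces a linear bijection of the tempered Colombeau space 𝓖_τ onto itself with a strict inversion theorem. -/

import Mathlib

open MeasureTheory SchwartzMap Filter Topology Bornology Complex

noncomputable section

/-- The Schwartz space `𝓢(ℝⁿ, ℂ)`. -/
abbrev Sch (n : ℕ) := SchwartzMap (EuclideanSpace ℝ (Fin n)) ℂ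

/-- The space `𝓢'` of tempered distributions, i.e. the continuous linear functionals on `𝓢`,
endowed (by Mathlib's default instance) with the strong topology of uniform convergence on
bounded subsets of `𝓢`. -/
abbrev SchDual (n : ℕ) := Sch n →L[ℂ] ℂ

/-- The canonical embedding `j : 𝓢 → 𝓢'`, `j(f)(g) = ∫ f(x) g(x) dx`. -/
def jEmb {n : ℕ} (f : Sch n) : SchDual n := by
  refine SchwartzMap.mkCLMtoNormedSpace (fun g : Sch n => ∫ x, f x * g x) ?_ ?_ ?_
  · intro g h
    have hg : Integrable (fun x => f x * g x) volume :=
      g.integrable.bdd_mul f.continuous.aestronglyMeasurable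
        (ae_of_all _ fun x => f.norm_le_seminorm ℂ x)
    have hh : Integrable (fun x => f x * h x) volume :=
      h.integrable.bdd_mul f.continuous.aestronglyMeasurable
        (ae_of_all _ fun x => f.norm_le_seminorm ℂ x)
    simp only [SchwartzMap.add_apply, mul_add]
    exact integral_add hg hh
  · intro a g
    simp only [SchwartzMap.smul_apply, smul_eq_mul, RingHom.id_apply]
    rw [← integral_const_mul]
    congr 1; funext x; ring
  · refine ⟨{(0, 0)}, ∫ x, ‖f x‖, integral_nonneg (fun x => norm_nonneg _), fun g => ?_⟩
    refine (norm_integral_le_integral_norm _).trans ?_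
    have : ∀ x, ‖f x * g x‖ ≤ ‖f x‖ * (SchwartzMap.seminorm ℂ 0 0) g := by
      intro x
      rw [norm_mul]
      exact mul_le_mul_of_nonneg_left (g.norm_le_seminorm ℂ x) (norm_nonneg _)
    refine (integral_mono_of_nonneg (Eventually.of_forall fun x => norm_nonneg _)
      (f.integrable.norm.mul_const _) (Eventually.of_forall this)).trans ?_
    rw [integral_mul_const]
    simp [schwartzSeminormFamily]

/-- The filter describing `ε → 0` with `ε ∈ (0,1]`. -/
def zeroFilter : Filter ℝ := nhdsWithin 0 (Set.Ioc 0 1)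

/-- A *test object* for `(𝓢', 𝓢)`: a net `(Φ_ε)` of continuous linear maps `𝓢' → 𝓢` such that
(ii) `j ∘ Φ_ε → id` in `L_b(𝓢',𝓢')`, (iii) `sup_{f ∈ B} q(Φ_ε (j f) - f) = O(ε^m)` for every
`m ∈ ℕ`, every bounded `B ⊆ 𝓢` and every seminorm `q` of `𝓢`, and (iv) for every bounded
`B' ⊆ 𝓢'` and every seminorm `q` of `𝓢` there is `N` with `sup_{u ∈ B'} q(Φ_ε u) = O(ε^{-N})`.
(The strong topology of `L_b(𝓢',𝓢')`, resp. its seminorms, are spelled out via uniform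
convergence on bounded sets, the seminorms of `𝓢'` being suprema over bounded subsets of `𝓢`.) -/
structure IsTestObject {n : ℕ} (Φ : ℝ → (SchDual n →L[ℂ] Sch n)) : Prop where
  tendsto_id : ∀ B' : Set (SchDual n), IsVonNBounded ℂ B' →
    ∀ B : Set (Sch n), IsVonNBounded ℂ B → ∀ δ > (0:ℝ), ∀ᶠ ε in zeroFilter,
      ∀ u ∈ B', ∀ g ∈ B, ‖jEmb (Φ ε u) g - u g‖ < δ
  negligible_on_Sch : ∀ m : ℕ, ∀ B : Set (Sch n), IsVonNBounded ℂ B → ∀ k l : ℕ,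
    ∃ C : ℝ, ∀ᶠ ε in zeroFilter, ∀ f ∈ B,
      SchwartzMap.seminorm ℂ k l (Φ ε (jEmb f) - f) ≤ C * ε ^ m
  moderate : ∀ B' : Set (SchDual n), IsVonNBounded ℂ B' → ∀ k l : ℕ,
    ∃ N : ℕ, ∃ C : ℝ, ∀ᶠ ε in zeroFilter, ∀ u ∈ B',
      SchwartzMap.seminorm ℂ k l (Φ ε u) ≤ C / ε ^ N

/-- A *0-test object* for `(𝓢', 𝓢)`: as `IsTestObject`, but with `j ∘ Φ_ε → 0` in
`L_b(𝓢',𝓢')` in (ii') and `sup_{f ∈ B} q(Φ_ε (j f)) = O(ε^m)` in (iii'). -/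
structure IsZeroTestObject {n : ℕ} (Φ : ℝ → (SchDual n →L[ℂ] Sch n)) : Prop where
  tendsto_zero : ∀ B' : Set (SchDual n), IsVonNBounded ℂ B' →
    ∀ B : Set (Sch n), IsVonNBounded ℂ B → ∀ δ > (0:ℝ), ∀ᶠ ε in zeroFilter,
      ∀ u ∈ B', ∀ g ∈ B, ‖jEmb (Φ ε u) g‖ < δ
  negligible_on_Sch : ∀ m : ℕ, ∀ B : Set (Sch n), IsVonNBounded ℂ B → ∀ k l : ℕ,
    ∃ C : ℝ, ∀ᶠ ε in zeroFilter, ∀ f ∈ B,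
      SchwartzMap.seminorm ℂ k l (Φ ε (jEmb f)) ≤ C * ε ^ m
  moderate : ∀ B' : Set (SchDual n), IsVonNBounded ℂ B' → ∀ k l : ℕ,
    ∃ N : ℕ, ∃ C : ℝ, ∀ᶠ ε in zeroFilter, ∀ u ∈ B',
      SchwartzMap.seminorm ℂ k l (Φ ε u) ≤ C / ε ^ N

/-- The Fourier transform `𝓕 : 𝓢 → 𝓢` (with kernel `e^{-2πi⟨x,ξ⟩}`) as a linear topological
isomorphism of the Schwartz space. -/
def fourierCLE (n : ℕ) : Sch n ≃L[ℂ] Sch n := FourierTransform.fourierCLE ℂ (Sch n)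

/-- The Fourier transform on tempered distributions, `𝓕'(u) = u ∘ 𝓕`. -/
def fourierDual {n : ℕ} (u : SchDual n) : SchDual n :=
  u.comp (fourierCLE n).toContinuousLinearMap

/-- `𝓕'` as a continuous linear map `𝓢' →L 𝓢'`. -/
def fourierDualCLM (n : ℕ) : SchDual n →L[ℂ] SchDual n :=
  ContinuousLinearMap.precomp ℂ (fourierCLE n).toContinuousLinearMap

/-- `(𝓕')⁻¹`, i.e. `u ↦ u ∘ 𝓕⁻¹`, as a continuous linear map `𝓢' →L 𝓢'`. -/
def fourierDualInvCLM (n : ℕ) : SchDual n →L[ℂ] SchDual n :=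
  ContinuousLinearMap.precomp ℂ (fourierCLE n).symm.toContinuousLinearMap

/-- The conjugation `Φ ↦ 𝓕⁻¹ ∘ Φ ∘ 𝓕'` of a smoothing operator. -/
def ftConj {n : ℕ} (Φ : SchDual n →L[ℂ] Sch n) : SchDual n →L[ℂ] Sch n :=
  ((fourierCLE n).symm.toContinuousLinearMap).comp (Φ.comp (fourierDualCLM n))

/-- The conjugation `Φ ↦ 𝓕 ∘ Φ ∘ (𝓕')⁻¹` of a smoothing operator. -/
def ftConjInv {n : ℕ} (Φ : SchDual n →L[ℂ] Sch n) : SchDual n →L[ℂ] Sch n :=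
  ((fourierCLE n).toContinuousLinearMap).comp (Φ.comp (fourierDualInvCLM n))

/-- The Fourier transform on the basic space: `(𝓕R)(Φ) = 𝓕(R(𝓕⁻¹ ∘ Φ ∘ 𝓕'))`. -/
def FTbasic {n : ℕ} (R : (SchDual n →L[ℂ] Sch n) → Sch n) :
    (SchDual n →L[ℂ] Sch n) → Sch n :=
  fun Φ => fourierCLE n (R (ftConj Φ))

/-- The candidate inverse Fourier transform on the basic space,
`R ↦ (Φ ↦ 𝓕⁻¹(R(𝓕 ∘ Φ ∘ (𝓕')⁻¹)))`. -/
def FTbasicInv {n : ℕ} (R : (SchDual n →L[ℂ] Sch n) → Sch n) :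
    (SchDual n →L[ℂ] Sch n) → Sch n :=
  fun Φ => (fourierCLE n).symm (R (ftConjInv Φ))

/-- An element `R` of the basic space (with discrete dependence) is *moderate* if for every
seminorm `q` of `𝓢` there is `N ∈ ℕ` such that for every test object `(Φ_ε)` one has
`q(R(Φ_ε)) = O(ε^{-N})` as `ε → 0`. -/
def Moderate {n : ℕ} (R : (SchDual n →L[ℂ] Sch n) → Sch n) : Prop :=
  ∀ k l : ℕ, ∃ N : ℕ, ∀ Φ : ℝ → (SchDual n →L[ℂ] Sch n), IsTestObject Φ →
    ∃ C : ℝ, ∀ᶠ ε in zeroFilter, SchwartzMap.seminorm ℂ k l (R (Φ ε)) ≤ C / ε ^ N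

/-- An element `R` of the basic space (with discrete dependence) is *negligible* if for every
seminorm `q` of `𝓢`, every `m ∈ ℕ` and every test object `(Φ_ε)` one has
`q(R(Φ_ε)) = O(ε^m)` as `ε → 0`. -/
def Negligible {n : ℕ} (R : (SchDual n →L[ℂ] Sch n) → Sch n) : Prop :=
  ∀ k l : ℕ, ∀ m : ℕ, ∀ Φ : ℝ → (SchDual n →L[ℂ] Sch n), IsTestObject Φ →
    ∃ C : ℝ, ∀ᶠ ε in zeroFilter, SchwartzMap.seminorm ℂ k l (R (Φ ε)) ≤ C * ε ^ m

open FourierTransform RealInnerProductSpace in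
lemma mult_formula {n : ℕ} (f g : Sch n) :
    ∫ x, (fourierCLE n f) x * g x = ∫ x, f x * (fourierCLE n g) x := by
  have hfl : (innerₗ (EuclideanSpace ℝ (Fin n))).flip = innerₗ (EuclideanSpace ℝ (Fin n)) := by
    ext x y; exact real_inner_comm x y
  have := VectorFourier.integral_bilin_fourierIntegral_eq_flip
    (E := ℂ) (F := ℂ) (G := ℂ) (μ := (volume : Measure (EuclideanSpace ℝ (Fin n))))
    (ν := (volume : Measure (EuclideanSpace ℝ (Fin n))))
    (e := Real.fourierChar) (L := innerₗ (EuclideanSpace ℝ (Fin n)))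
    (ContinuousLinearMap.mul ℂ ℂ) Real.continuous_fourierChar continuous_inner
    f.integrable g.integrable
  rw [hfl] at this
  exact SchwartzMap.integral_fourier_mul_eq f g

lemma jEmb_apply {n : ℕ} (f g : Sch n) : jEmb f g = ∫ x, f x * g x := rfl

lemma jEmb_fourier {n : ℕ} (f g : Sch n) :
    jEmb (fourierCLE n f) g = jEmb f (fourierCLE n g) := by
  simp only [jEmb_apply, mult_formula]
lemma seminorm_sup_apply_le_sum {E : Type*} [AddCommGroup E] [Module ℂ E]
    {ι : Type*} (p : ι → Seminorm ℂ E) (s : Finset ι) (f : E) :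
    (s.sup p) f ≤ ∑ i ∈ s, p i f := by
  induction s using Finset.cons_induction with
  | empty => simp [Seminorm.bot_eq_zero]
  | cons i s hi ih =>
    rw [Finset.sup_cons, Finset.sum_cons]
    rw [Seminorm.sup_apply]
    refine max_le ?_ (ih.trans ?_)
    · exact le_add_of_nonneg_right (Finset.sum_nonneg fun j _ => apply_nonneg _ _)
    · exact le_add_of_nonneg_left (apply_nonneg _ _)

lemma clm_bound {n : ℕ} (T : Sch n →L[ℂ] Sch n) (k l : ℕ) :
    ∃ s : Finset (ℕ × ℕ), ∃ C : ℝ, 0 ≤ C ∧ ∀ f : Sch n,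
      SchwartzMap.seminorm ℂ k l (T f) ≤ C * ∑ i ∈ s, SchwartzMap.seminorm ℂ i.1 i.2 f := by
  have hq : Continuous ((SchwartzMap.seminorm ℂ k l (E := EuclideanSpace ℝ (Fin n)) (F := ℂ)).comp
      T.toLinearMap) := by
    have h1 := (schwartz_withSeminorms ℂ (EuclideanSpace ℝ (Fin n)) ℂ).continuous_seminorm (k, l)
    exact (by simpa [schwartzSeminormFamily] using h1 : Continuous
      (SchwartzMap.seminorm ℂ k l (E := EuclideanSpace ℝ (Fin n)) (F := ℂ))).comp T.continuous
  obtain ⟨s, C, hC, h⟩ := Seminorm.bound_of_continuous (schwartz_withSeminorms ℂ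
    (EuclideanSpace ℝ (Fin n)) ℂ) _ hq
  refine ⟨s, C, C.coe_nonneg, fun f => ?_⟩
  calc SchwartzMap.seminorm ℂ k l (T f) ≤ (C • s.sup (schwartzSeminormFamily ℂ _ _)) f := h f
    _ ≤ C * ∑ i ∈ s, SchwartzMap.seminorm ℂ i.1 i.2 f := by
        rw [Seminorm.smul_apply, NNReal.smul_def, smul_eq_mul]
        refine mul_le_mul_of_nonneg_left ?_ C.coe_nonneg
        exact (seminorm_sup_apply_le_sum _ s f).trans
          (le_of_eq (Finset.sum_congr rfl fun i _ => rfl))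

lemma eventually_Ioc : ∀ᶠ ε in zeroFilter, ε ∈ Set.Ioc (0:ℝ) 1 := self_mem_nhdsWithin

lemma combine_bound {ι α : Type*} (s : Finset ι) (A : Set α) (g : ι → ℝ → α → ℝ) (w : ℝ → ℝ)
    (hw : ∀ ε ∈ Set.Ioc (0:ℝ) 1, 0 ≤ w ε)
    (h : ∀ i ∈ s, ∃ C : ℝ, ∀ᶠ ε in zeroFilter, ∀ a ∈ A, g i ε a ≤ C * w ε) :
    ∃ C : ℝ, 0 ≤ C ∧ ∀ᶠ ε in zeroFilter, ∀ a ∈ A, (∑ i ∈ s, g i ε a) ≤ C * w ε := by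
  induction s using Finset.cons_induction with
  | empty =>
    exact ⟨0, le_refl 0, Eventually.of_forall fun ε a _ => by simp⟩
  | cons i s hi ih =>
    obtain ⟨C₂, hC₂0, hev₂⟩ := ih fun j hj => h j (Finset.mem_cons_of_mem hj)
    obtain ⟨C₁, hev₁⟩ := h i (Finset.mem_cons_self i s)
    refine ⟨max C₁ 0 + C₂, by positivity, ?_⟩
    filter_upwards [hev₁, hev₂, eventually_Ioc] with ε h1 h2 hε a ha
    rw [Finset.sum_cons, add_mul]
    exact add_le_add ((h1 a ha).trans
      (mul_le_mul_of_nonneg_right (le_max_left _ _) (hw ε hε))) (h2 a ha)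

lemma my_div_pow_le {C : ℝ} {N' N : ℕ} (h : N' ≤ N) :
    ∀ᶠ ε in zeroFilter, C / ε ^ N' ≤ (max C 0) * (ε ^ N)⁻¹ := by
  filter_upwards [eventually_Ioc] with ε hε
  have hp' : (0:ℝ) < ε ^ N' := pow_pos hε.1 _
  have hp : (0:ℝ) < ε ^ N := pow_pos hε.1 _
  calc C / ε ^ N' ≤ max C 0 / ε ^ N' := by
        exact div_le_div_of_nonneg_right (le_max_left _ _) hp'.le
    _ ≤ max C 0 * (ε ^ N)⁻¹ := by
        rw [div_eq_mul_inv]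
        refine mul_le_mul_of_nonneg_left ?_ (le_max_right _ _)
        exact inv_anti₀ hp (pow_le_pow_of_le_one hε.1.le hε.2 h)

lemma jEmb_fourier_symm {n : ℕ} (f g : Sch n) :
    jEmb ((fourierCLE n).symm f) g = jEmb f ((fourierCLE n).symm g) := by
  have h := jEmb_fourier ((fourierCLE n).symm f) ((fourierCLE n).symm g)
  rw [(fourierCLE n).apply_symm_apply, (fourierCLE n).apply_symm_apply] at h
  exact h.symm

lemma fourierDualCLM_jEmb {n : ℕ} (f : Sch n) :
    fourierDualCLM n (jEmb f) = jEmb (fourierCLE n f) := by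
  ext g
  have : fourierDualCLM n (jEmb f) g = jEmb f (fourierCLE n g) := rfl
  rw [this, ← jEmb_fourier]

lemma ftConj_apply {n : ℕ} (Φ : SchDual n →L[ℂ] Sch n) (u : SchDual n) :
    ftConj Φ u = (fourierCLE n).symm (Φ (fourierDualCLM n u)) := rfl

lemma fourierDualCLM_apply {n : ℕ} (u : SchDual n) (g : Sch n) :
    fourierDualCLM n u g = u (fourierCLE n g) := rfl

lemma ftConj_isTestObject {n : ℕ} {Φ : ℝ → (SchDual n →L[ℂ] Sch n)} (h : IsTestObject Φ) :
    IsTestObject (fun ε => ftConj (Φ ε)) where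
  tendsto_id := by
    intro B' hB' B hB δ hδ
    have hB'' : IsVonNBounded ℂ ((fourierDualCLM n) '' B') := hB'.image (fourierDualCLM n)
    have hB₂ : IsVonNBounded ℂ (((fourierCLE n).symm.toContinuousLinearMap) '' B) :=
      hB.image _
    filter_upwards [h.tendsto_id _ hB'' _ hB₂ δ hδ] with ε hε u hu g hg
    have e1 : jEmb (ftConj (Φ ε) u) g
        = jEmb (Φ ε (fourierDualCLM n u)) ((fourierCLE n).symm g) := by
      rw [ftConj_apply, jEmb_fourier_symm]
    have e2 : u g = (fourierDualCLM n u) ((fourierCLE n).symm g) := by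
      rw [fourierDualCLM_apply, (fourierCLE n).apply_symm_apply]
    rw [e1, e2]
    exact hε _ (Set.mem_image_of_mem _ hu) _ (Set.mem_image_of_mem _ hg)
  negligible_on_Sch := by
    intro m B hB k l
    obtain ⟨s, C, hC0, hbd⟩ := clm_bound ((fourierCLE n).symm.toContinuousLinearMap) k l
    have hFB : IsVonNBounded ℂ (((fourierCLE n).toContinuousLinearMap) '' B) := hB.image _
    have hyp : ∀ i ∈ s, ∃ Ci : ℝ, ∀ᶠ ε in zeroFilter, ∀ f ∈ B,
        SchwartzMap.seminorm ℂ i.1 i.2 (Φ ε (jEmb (fourierCLE n f)) - fourierCLE n f)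
          ≤ Ci * ε ^ m := by
      intro i hi
      obtain ⟨Ci, hCi⟩ := h.negligible_on_Sch m _ hFB i.1 i.2
      refine ⟨Ci, ?_⟩
      filter_upwards [hCi] with ε hε f hf
      exact hε _ (Set.mem_image_of_mem _ hf)
    obtain ⟨C', hC'0, hev⟩ := combine_bound s B
      (fun i ε f => SchwartzMap.seminorm ℂ i.1 i.2 (Φ ε (jEmb (fourierCLE n f)) - fourierCLE n f))
      (fun ε => ε ^ m) (fun ε hε => pow_nonneg hε.1.le m) hyp
    refine ⟨C * C', ?_⟩
    filter_upwards [hev] with ε hε f hf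
    have key : ftConj (Φ ε) (jEmb f) - f
        = (fourierCLE n).symm (Φ ε (jEmb (fourierCLE n f)) - fourierCLE n f) := by
      rw [map_sub, ftConj_apply, fourierDualCLM_jEmb, (fourierCLE n).symm_apply_apply]
    rw [key, mul_assoc]
    exact (hbd _).trans (mul_le_mul_of_nonneg_left (hε f hf) hC0)
  moderate := by
    intro B' hB' k l
    obtain ⟨s, C, hC0, hbd⟩ := clm_bound ((fourierCLE n).symm.toContinuousLinearMap) k l
    have hB'' : IsVonNBounded ℂ ((fourierDualCLM n) '' B') := hB'.image (fourierDualCLM n)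
    have H : ∀ i : ℕ × ℕ, ∃ N : ℕ, ∃ Ci : ℝ, ∀ᶠ ε in zeroFilter,
        ∀ u ∈ (fourierDualCLM n) '' B', SchwartzMap.seminorm ℂ i.1 i.2 (Φ ε u) ≤ Ci / ε ^ N :=
      fun i => h.moderate _ hB'' i.1 i.2
    choose Nf Cf hf using H
    set N := s.sup Nf with hN
    have hyp : ∀ i ∈ s, ∃ Ci : ℝ, ∀ᶠ ε in zeroFilter, ∀ u ∈ (fourierDualCLM n) '' B',
        SchwartzMap.seminorm ℂ i.1 i.2 (Φ ε u) ≤ Ci * (ε ^ N)⁻¹ := by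
      intro i hi
      refine ⟨max (Cf i) 0, ?_⟩
      filter_upwards [hf i, my_div_pow_le (Finset.le_sup hi)] with ε h1 h2 u hu
      exact (h1 u hu).trans h2
    obtain ⟨C', hC'0, hev⟩ := combine_bound s ((fourierDualCLM n) '' B')
      (fun i ε u => SchwartzMap.seminorm ℂ i.1 i.2 (Φ ε u))
      (fun ε => (ε ^ N)⁻¹)
      (fun ε hε => inv_nonneg.mpr (pow_nonneg hε.1.le N)) hyp
    refine ⟨N, C * C', ?_⟩
    filter_upwards [hev, eventually_Ioc] with ε hε hεI u hu
    have hb : SchwartzMap.seminorm ℂ k l (ftConj (Φ ε) u)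
        ≤ C * ∑ i ∈ s, SchwartzMap.seminorm ℂ i.1 i.2 (Φ ε (fourierDualCLM n u)) := by
      rw [ftConj_apply]
      exact hbd _
    refine hb.trans ?_
    rw [div_eq_mul_inv, mul_assoc]
    exact mul_le_mul_of_nonneg_left (hε _ (Set.mem_image_of_mem _ hu)) hC0

lemma ftConjInv_ftConj {n : ℕ} (Φ : SchDual n →L[ℂ] Sch n) : ftConjInv (ftConj Φ) = Φ := by
  refine ContinuousLinearMap.ext fun u => ?_
  show fourierCLE n ((fourierCLE n).symm (Φ (fourierDualCLM n (fourierDualInvCLM n u)))) = Φ u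
  rw [(fourierCLE n).apply_symm_apply]
  congr 1
  refine ContinuousLinearMap.ext fun g => ?_
  show u ((fourierCLE n).symm (fourierCLE n g)) = u g
  rw [(fourierCLE n).symm_apply_apply]

lemma ftConj_ftConjInv {n : ℕ} (Φ : SchDual n →L[ℂ] Sch n) : ftConj (ftConjInv Φ) = Φ := by
  refine ContinuousLinearMap.ext fun u => ?_
  show (fourierCLE n).symm (fourierCLE n (Φ (fourierDualInvCLM n (fourierDualCLM n u)))) = Φ u
  rw [(fourierCLE n).symm_apply_apply]
  congr 1
  refine ContinuousLinearMap.ext fun g => ?_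
  show u (fourierCLE n ((fourierCLE n).symm g)) = u g
  rw [(fourierCLE n).apply_symm_apply]

/-- The Fourier transform on the basic space, `(𝓕R)(Φ) = 𝓕(R(𝓕⁻¹ ∘ Φ ∘ 𝓕'))`, maps moderate
maps to moderate maps and negligible maps to negligible maps; the map
`R ↦ (Φ ↦ 𝓕⁻¹(R(𝓕 ∘ Φ ∘ (𝓕')⁻¹)))` is a two-sided inverse of it on the basic space; and it
is `ℂ`-linear. Consequently it induces a linear bijection of the tempered Colombeau space
`𝓖_τ` (the quotient of moderate by negligible maps) onto itself, with a strict inversion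
theorem. -/
theorem fourier_basic_space (n : ℕ) (hn : 0 < n) :
    (∀ R : (SchDual n →L[ℂ] Sch n) → Sch n, Moderate R → Moderate (FTbasic R)) ∧
    (∀ R : (SchDual n →L[ℂ] Sch n) → Sch n, Negligible R → Negligible (FTbasic R)) ∧
    (∀ R : (SchDual n →L[ℂ] Sch n) → Sch n, FTbasicInv (FTbasic R) = R) ∧
    (∀ R : (SchDual n →L[ℂ] Sch n) → Sch n, FTbasic (FTbasicInv R) = R) ∧
    (∀ (c : ℂ) (R₁ R₂ : (SchDual n →L[ℂ] Sch n) → Sch n),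
      FTbasic (fun Φ => c • R₁ Φ + R₂ Φ) = fun Φ => c • FTbasic R₁ Φ + FTbasic R₂ Φ) := by
  refine ⟨?_, ?_, ?_, ?_, ?_⟩
  · -- Moderate
    intro R hR k l
    obtain ⟨s, C, hC0, hbd⟩ := clm_bound (fourierCLE n).toContinuousLinearMap k l
    choose Nf hf using fun i : ℕ × ℕ => hR i.1 i.2
    refine ⟨s.sup Nf, ?_⟩
    intro Φ hΦ
    have hΦ' := ftConj_isTestObject hΦ
    have hyp : ∀ i ∈ s, ∃ Ci : ℝ, ∀ᶠ ε in zeroFilter, ∀ a ∈ (Set.univ : Set Unit),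
        SchwartzMap.seminorm ℂ i.1 i.2 (R (ftConj (Φ ε))) ≤ Ci * (ε ^ s.sup Nf)⁻¹ := by
      intro i hi
      obtain ⟨Ci, hCi⟩ := hf i (fun ε => ftConj (Φ ε)) hΦ'
      refine ⟨max Ci 0, ?_⟩
      filter_upwards [hCi, my_div_pow_le (Finset.le_sup hi)] with ε h1 h2 a _
      exact h1.trans h2
    obtain ⟨C', hC'0, hev⟩ := combine_bound s Set.univ
      (fun i ε (_ : Unit) => SchwartzMap.seminorm ℂ i.1 i.2 (R (ftConj (Φ ε))))
      (fun ε => (ε ^ s.sup Nf)⁻¹)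
      (fun ε hε => inv_nonneg.mpr (pow_nonneg hε.1.le _)) hyp
    refine ⟨C * C', ?_⟩
    filter_upwards [hev] with ε hε
    have hb : SchwartzMap.seminorm ℂ k l (FTbasic R (Φ ε))
        ≤ C * ∑ i ∈ s, SchwartzMap.seminorm ℂ i.1 i.2 (R (ftConj (Φ ε))) := hbd _
    refine hb.trans ?_
    rw [div_eq_mul_inv, mul_assoc]
    exact mul_le_mul_of_nonneg_left (hε () trivial) hC0
  · -- Negligible
    intro R hR k l m Φ hΦ
    obtain ⟨s, C, hC0, hbd⟩ := clm_bound (fourierCLE n).toContinuousLinearMap k l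
    have hΦ' := ftConj_isTestObject hΦ
    have hyp : ∀ i ∈ s, ∃ Ci : ℝ, ∀ᶠ ε in zeroFilter, ∀ a ∈ (Set.univ : Set Unit),
        SchwartzMap.seminorm ℂ i.1 i.2 (R (ftConj (Φ ε))) ≤ Ci * ε ^ m := by
      intro i _
      obtain ⟨Ci, hCi⟩ := hR i.1 i.2 m (fun ε => ftConj (Φ ε)) hΦ'
      exact ⟨Ci, by filter_upwards [hCi] with ε h1 a _ using h1⟩
    obtain ⟨C', hC'0, hev⟩ := combine_bound s Set.univ
      (fun i ε (_ : Unit) => SchwartzMap.seminorm ℂ i.1 i.2 (R (ftConj (Φ ε))))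
      (fun ε => ε ^ m) (fun ε hε => pow_nonneg hε.1.le _) hyp
    refine ⟨C * C', ?_⟩
    filter_upwards [hev] with ε hε
    have hb : SchwartzMap.seminorm ℂ k l (FTbasic R (Φ ε))
        ≤ C * ∑ i ∈ s, SchwartzMap.seminorm ℂ i.1 i.2 (R (ftConj (Φ ε))) := hbd _
    refine hb.trans ?_
    rw [mul_assoc]
    exact mul_le_mul_of_nonneg_left (hε () trivial) hC0
  · intro R
    funext Φ
    show (fourierCLE n).symm (fourierCLE n (R (ftConj (ftConjInv Φ)))) = R Φ
    rw [ftConj_ftConjInv, (fourierCLE n).symm_apply_apply]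
  · intro R
    funext Φ
    show fourierCLE n ((fourierCLE n).symm (R (ftConjInv (ftConj Φ)))) = R Φ
    rw [ftConjInv_ftConj, (fourierCLE n).apply_symm_apply]
  · intro c R₁ R₂
    funext Φ
    show fourierCLE n (c • R₁ (ftConj Φ) + R₂ (ftConj Φ)) = _
    rw [map_add, _root_.map_smul]; rfl

end
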